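/- arXiv:2106.09226 — 4 statements merged into one kernel-verified Lean document; each statement's English description precedes it below -/
import Mathlib

section
/- Assume regularity. Fix a timestep i ≥ 1 and a sequence length T ≥ 1. Then there exists a diagonal matrix D ∈ ℝ^{|H|×|H|} with finite positive diagonal entries, independent of the input, such that for every x ∈ X^T with P(X_{1:T} = x) > 0 there is a scalar r_x > 0 with P(H_i | X_{i+1:T+i} = x) = r_x · D · P(H_0 | X_{1:T} = x). -/
/-- `hmmLik A W x h = P(X_{1:t} = x | H_0 = h)`: the probability that a hidden
Markov chain with transition matrix `A` (`A h' h = P(H_i = h' | H_{i-1} = h)`)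
and emission probabilities `W` (`W z h = P(X_i = z | H_i = h)`), started in
state `h` at time `0`, emits the token sequence `x` at times `1, …, t`. -/
noncomputable def hmmLik {H X : Type*} [Fintype H] (A : Matrix H H ℝ)
    (W : X → H → ℝ) : List X → H → ℝ
  | [], _ => 1
  | z :: xs, h => ∑ h' : H, A h' h * W z h' * hmmLik A W xs h'

lemma hmmLik_nonneg {H X : Type*} [Fintype H] (A : Matrix H H ℝ)
    (W : X → H → ℝ) (hA0 : ∀ h h', 0 ≤ A h' h) (hW0 : ∀ z h, 0 ≤ W z h) :
    ∀ xs h, 0 ≤ hmmLik A W xs h := by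
  intro xs
  induction xs with
  | nil => intro h; simp [hmmLik]
  | cons z xs ih =>
      intro h
      rw [hmmLik]
      exact Finset.sum_nonneg fun h' _ =>
        mul_nonneg (mul_nonneg (hA0 _ _) (hW0 _ _)) (ih h')

lemma pow_nonneg_entries {H : Type*} [Fintype H] [DecidableEq H]
    (A : Matrix H H ℝ) (hA0 : ∀ h h', 0 ≤ A h' h) :
    ∀ n h h', 0 ≤ (A ^ n) h' h := by
  intro n
  induction n with
  | zero => intro h h'; simp [Matrix.one_apply]; split <;> norm_num
  | succ n ih =>
      intro h h'
      rw [pow_succ, Matrix.mul_apply]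
      exact Finset.sum_nonneg fun k _ => mul_nonneg (ih _ _) (hA0 _ _)

theorem stmt1 {H X : Type*} [Fintype H] [Fintype X] [DecidableEq H]
    (μ : H → ℝ) (A : Matrix H H ℝ) (W : X → H → ℝ)
    (hμ0 : ∀ h, 0 ≤ μ h) (hμ1 : ∑ h, μ h = 1)
    (hA0 : ∀ h h', 0 ≤ A h' h) (hA1 : ∀ h, ∑ h', A h' h = 1)
    (hW0 : ∀ z h, 0 ≤ W z h) (hW1 : ∀ h, ∑ z, W z h = 1)
    -- regularity: ergodicity of the chain and full support of `P(H_0)`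
    (hErg : ∃ n₀ : ℕ, ∀ n ≥ n₀, ∀ h h' : H, 0 < (A ^ n) h' h)
    (hfull : ∀ h, 0 < μ h)
    (i T : ℕ) (hi : 1 ≤ i) (hT : 1 ≤ T) :
    ∃ d : H → ℝ, (∀ h, 0 < d h) ∧
      ∀ x : Fin T → X,
        0 < ∑ h, μ h * hmmLik A W (List.ofFn x) h →
        ∃ r : ℝ, 0 < r ∧ ∀ g : H,
          ((A ^ i).mulVec μ) g * hmmLik A W (List.ofFn x) g /
              (∑ h, ((A ^ i).mulVec μ) h * hmmLik A W (List.ofFn x) h)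
            = r * d g *
              (μ g * hmmLik A W (List.ofFn x) g /
                (∑ h, μ h * hmmLik A W (List.ofFn x) h)) := by
  -- positivity of the pushed-forward distribution `A^i μ`
  have hMpos : ∀ g, 0 < ((A ^ i).mulVec μ) g := by
    intro g
    obtain ⟨n₀, hn₀⟩ := hErg
    -- there is k with (A^i) g k > 0
    have hrow : ∃ k, 0 < (A ^ i) g k := by
      by_contra hcon
      push_neg at hcon
      have hrow0 : ∀ k, (A ^ i) g k = 0 := fun k =>
        le_antisymm (hcon k) (pow_nonneg_entries A hA0 i k g)
      have hpos := hn₀ (i + n₀) (Nat.le_add_left _ _) g g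
      rw [pow_add, Matrix.mul_apply] at hpos
      have : ∑ k, (A ^ i) g k * (A ^ n₀) k g = 0 := by
        apply Finset.sum_eq_zero; intro k _; rw [hrow0 k, zero_mul]
      rw [this] at hpos; exact lt_irrefl 0 hpos
    obtain ⟨k, hk⟩ := hrow
    have : 0 < (A ^ i) g k * μ k := mul_pos hk (hfull k)
    refine lt_of_lt_of_le this ?_
    rw [Matrix.mulVec, dotProduct]
    exact Finset.single_le_sum
      (fun k _ => mul_nonneg (pow_nonneg_entries A hA0 i k g) (hμ0 k))
      (Finset.mem_univ k)
  refine ⟨fun g => ((A ^ i).mulVec μ) g / μ g,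
    fun g => div_pos (hMpos g) (hfull g), ?_⟩
  intro x hS
  set L := hmmLik A W (List.ofFn x) with hL
  have hLnn : ∀ h, 0 ≤ L h := fun h => hmmLik_nonneg A W hA0 hW0 _ h
  -- positivity of the second normalizer
  have hex : ∃ h₀, 0 < L h₀ := by
    by_contra hcon
    push_neg at hcon
    have : ∑ h, μ h * L h = 0 := by
      apply Finset.sum_eq_zero; intro h _
      rw [le_antisymm (hcon h) (hLnn h), mul_zero]
    rw [this] at hS; exact lt_irrefl 0 hS
  obtain ⟨h₀, hLh₀⟩ := hex
  have hS' : 0 < ∑ h, ((A ^ i).mulVec μ) h * L h := by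
    have : 0 < ((A ^ i).mulVec μ) h₀ * L h₀ := mul_pos (hMpos h₀) hLh₀
    refine lt_of_lt_of_le this ?_
    exact Finset.single_le_sum
      (fun h _ => mul_nonneg (hMpos h).le (hLnn h)) (Finset.mem_univ h₀)
  refine ⟨(∑ h, μ h * L h) / (∑ h, ((A ^ i).mulVec μ) h * L h),
    div_pos hS hS', ?_⟩
  intro g
  have hμg := (hfull g).ne'
  field_simp
end

section
/- Fix any prompt vector π ∈ [0,1]^{|H|} and define the modified sequence X̂ accordingly. For an input x ∈ X^T, let ê(x) = (π, e(∅), e(x_1), …, e(x_T)) be the embedding sequence of length T+2, where ∅ is an arbitrary token. Then for every position i ∈ [T+2], the aggregated message satisfies τ_i(ê(x)) = P(H_i, X̂_{−i} = (z̃, ∅, x)_{−i}). Consequently, for every i > 1: if P(X̂_{−i} = (z̃, ∅, x)_{−i}) > 0 then Ḡ_i(ê(x)) = P(X̂_i | X̂_{−i} = (z̃, ∅, x)_{−i}) = W · P(H_i | X̂_{−i} = (z̃, ∅, x)_{−i}); otherwise Ḡ_i(ê(x)) = 0. -/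
open scoped Classical

noncomputable section

/-- Forward pass: `fwdVec A μ vs` is the vector
`g ↦ P(H_{t+1} = g, evidence v_1, …, v_t)` for a Markov chain with transition
matrix `A`, where `μ` is the joint vector at the first position and each
`v_k : H → ℝ` is the evidence (emission likelihood) vector at position `k`. -/
def fwdVec {H : Type*} [Fintype H] (A : Matrix H H ℝ) :
    (H → ℝ) → List (H → ℝ) → (H → ℝ)
  | μ, [] => μ
  | μ, v :: vs => fwdVec A (A.mulVec fun h => μ h * v h) vs

/-- Left (backward) message: `lmsg A μ i vs` is the message `δ←_{i+1→i}` sent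
into (1-indexed) position `i`, where `vs = (v_{i+1}, …, v_t)` is the suffix of
evidence vectors.  Base case `δ←_{t+1→t} = P(H_t) = A^t μ`; recursion
`δ←_{i+1→i}(v) = P(H_i | H_{i+1}) (δ←_{i+2→i+1}(v) ⊙ v_{i+1})` with
`P(H_i = g | H_{i+1} = g') = A g' g · (A^i μ) g / (A^{i+1} μ) g'`. -/
def lmsg {H : Type*} [Fintype H] [DecidableEq H] (A : Matrix H H ℝ) (μ : H → ℝ) :
    ℕ → List (H → ℝ) → (H → ℝ)
  | i, [] => (A ^ i).mulVec μ
  | i, v :: vs => fun g => ∑ g' : H,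
      A g' g * ((A ^ i).mulVec μ) g / ((A ^ (i + 1)).mulVec μ) g'
        * (lmsg A μ (i + 1) vs g' * v g')

/-- Aggregated message `τ_i(v)` at 0-indexed position `i` of the evidence
sequence `vs` (the hidden state at 0-indexed position `i` is `H_{i+1}`, with
`P(H_{i+1}) = A^{i+1} μ`; the right message `δ→` is the forward pass started
from `P(H_1) = A μ`). -/
def tau {H : Type*} [Fintype H] [DecidableEq H] (A : Matrix H H ℝ) (μ : H → ℝ)
    (vs : List (H → ℝ)) (i : ℕ) : H → ℝ :=
  if i = 0 then lmsg A μ 1 (vs.drop 1)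
  else if i = vs.length - 1 then fwdVec A (A.mulVec μ) (vs.take i)
  else fun g =>
    lmsg A μ (i + 1) (vs.drop (i + 1)) g * fwdVec A (A.mulVec μ) (vs.take i) g
      / ((A ^ (i + 1)).mulVec μ) g

/-- Model output `Ḡ_i(v) = W τ_i(v) / ‖τ_i(v)‖₁`, and `0` when `‖τ_i(v)‖₁ = 0`. -/
def gbar {H X : Type*} [Fintype H] [Fintype X] [DecidableEq H] (A : Matrix H H ℝ)
    (μ : H → ℝ) (W : X → H → ℝ) (vs : List (H → ℝ)) (i : ℕ) : X → ℝ :=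
  if (∑ g, |tau A μ vs i g|) = 0 then fun _ => 0
  else fun z => ∑ g, W z g * (tau A μ vs i g / ∑ g', |tau A μ vs i g'|)

/-- `jointAt A μ₁ vs i g = P(H at position i equals g, evidence at all other
positions)`: replace the evidence vector at (0-indexed) position `i` by the
indicator of `g` and sum the forward pass (`μ₁` = distribution at position 0). -/
def jointAt {H : Type*} [Fintype H] [DecidableEq H] (A : Matrix H H ℝ)
    (μ1 : H → ℝ) (vs : List (H → ℝ)) (i : ℕ) (g : H) : ℝ :=
  ∑ h, fwdVec A μ1 (vs.set i fun g' => if g' = g then 1 else 0) h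

/-- Embedding sequence `ê(x) = (π, e(∅), e(x_1), …, e(x_T))` where
`e(z) = W z ·` is the proper embedding of token `z` and `π` is the prompt.
These are also exactly the emission-likelihood vectors of the modified
sequence `x̂ = (z̃, ∅, x_1, …, x_T)` (the modified emission of `z̃` at
position 1 is `π`). -/
def promptEmb {H X : Type*} (W : X → H → ℝ) (π : H → ℝ) (e0 : X) {T : ℕ}
    (x : Fin T → X) : List (H → ℝ) :=
  π :: (fun g => W e0 g) :: List.ofFn fun k : Fin T => fun g => W (x k) g

/-!
STATEMENT 3 (Lemma B.1 of the paper).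

HMM with initial distribution `μ`, transitions `A`, emissions `W`; regularity
holds.  Fix a prompt `π ∈ [0,1]^{|H|}`, an arbitrary token `∅ = e0`, and an
input `x ∈ X^T`; let `ê(x)` be the length-`(T+2)` embedding sequence above.
Then for every position `i ∈ [T+2]` (0-indexed `i < T+2`),
`τ_i(ê(x)) = P(H_i, X̂_{−i} = (z̃, ∅, x)_{−i})` (the hidden chain of the
modified sequence starts at `P(H_1) = A μ`), and consequently for every
`i > 1` (0-indexed `i ≥ 1`): if `P(X̂_{−i} = (z̃,∅,x)_{−i}) > 0` then
`Ḡ_i(ê(x)) = P(X̂_i | X̂_{−i} = (z̃,∅,x)_{−i}) = W P(H_i | X̂_{−i} = (z̃,∅,x)_{−i})`,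
and otherwise `Ḡ_i(ê(x)) = 0`.
-/

namespace Stmt3Aux

variable {H : Type*} [Fintype H] [DecidableEq H]

/-- Backward probability: `bprob A vs g = P(evidence vs | current state g)`,
evidence starting at the current position. -/
def bprob (A : Matrix H H ℝ) : List (H → ℝ) → H → ℝ
  | [], _ => 1
  | v :: vs, g => v g * ∑ g', A g' g * bprob A vs g'

lemma fwdVec_append (A : Matrix H H ℝ) (μ : H → ℝ) (vs ws : List (H → ℝ)) :
    fwdVec A μ (vs ++ ws) = fwdVec A (fwdVec A μ vs) ws := by
  induction vs generalizing μ with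
  | nil => rfl
  | cons v vs ih => simp [fwdVec, ih]

lemma sum_fwdVec (A : Matrix H H ℝ) (hA1 : ∀ h, ∑ h', A h' h = 1)
    (vs : List (H → ℝ)) (μ : H → ℝ) :
    ∑ h, fwdVec A μ vs h = ∑ g, μ g * bprob A vs g := by
  induction vs generalizing μ with
  | nil => simp [fwdVec, bprob]
  | cons v vs ih =>
      rw [show fwdVec A μ (v :: vs) = fwdVec A (A.mulVec fun h => μ h * v h) vs from rfl, ih]
      simp only [Matrix.mulVec, dotProduct, bprob, Finset.sum_mul]
      rw [Finset.sum_comm]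
      refine Finset.sum_congr rfl fun g' _ => ?_
      simp only [Finset.mul_sum]
      refine Finset.sum_congr rfl fun g _ => ?_
      ring

lemma bprob_nonneg (A : Matrix H H ℝ) (hA0 : ∀ h h', 0 ≤ A h' h)
    (vs : List (H → ℝ)) (hvs : ∀ v ∈ vs, ∀ h, 0 ≤ v h) (g : H) :
    0 ≤ bprob A vs g := by
  induction vs generalizing g with
  | nil => simp [bprob]
  | cons v vs ih =>
      refine mul_nonneg (hvs v (by simp) g) (Finset.sum_nonneg fun g' _ => ?_)
      exact mul_nonneg (hA0 g g') (ih (fun w hw => hvs w (by simp [hw])) g')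

lemma fwdVec_nonneg (A : Matrix H H ℝ) (hA0 : ∀ h h', 0 ≤ A h' h)
    (vs : List (H → ℝ)) (μ : H → ℝ) (hμ : ∀ h, 0 ≤ μ h)
    (hvs : ∀ v ∈ vs, ∀ h, 0 ≤ v h) (h : H) :
    0 ≤ fwdVec A μ vs h := by
  induction vs generalizing μ with
  | nil => exact hμ h
  | cons v vs ih =>
      refine ih (A.mulVec fun h => μ h * v h) (fun h' => ?_)
        (fun w hw => hvs w (by simp [hw]))
      exact Finset.sum_nonneg fun k _ =>
        mul_nonneg (hA0 k h') (mul_nonneg (hμ k) (hvs v (by simp) k))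

lemma lmsg_eq (A : Matrix H H ℝ) (μ : H → ℝ) (hA1 : ∀ h, ∑ h', A h' h = 1)
    (hν : ∀ j g, 0 < ((A ^ j).mulVec μ) g)
    (vs : List (H → ℝ)) : ∀ i g,
    lmsg A μ i vs g = ((A ^ i).mulVec μ) g * ∑ g', A g' g * bprob A vs g' := by
  induction vs with
  | nil => intro i g; simp [lmsg, bprob, hA1 g]
  | cons v vs ih =>
      intro i g
      show (∑ g' : H, A g' g * ((A ^ i).mulVec μ) g / ((A ^ (i + 1)).mulVec μ) g'
          * (lmsg A μ (i + 1) vs g' * v g'))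
        = ((A ^ i).mulVec μ) g * ∑ g', A g' g * bprob A (v :: vs) g'
      rw [Finset.mul_sum]
      refine Finset.sum_congr rfl fun g' _ => ?_
      rw [ih (i + 1) g']
      have hy : ((A ^ (i + 1)).mulVec μ) g' ≠ 0 := (hν (i + 1) g').ne'
      simp only [bprob]
      field_simp

lemma jointAt_eq (A : Matrix H H ℝ) (hA1 : ∀ h, ∑ h', A h' h = 1)
    (μ1 : H → ℝ) (vs : List (H → ℝ)) (i : ℕ) (hi : i < vs.length) (g : H) :
    jointAt A μ1 vs i g
      = fwdVec A μ1 (vs.take i) g * ∑ g', A g' g * bprob A (vs.drop (i + 1)) g' := by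
  rw [jointAt, List.set_eq_take_append_cons_drop, if_pos hi, fwdVec_append,
    sum_fwdVec A hA1]
  simp only [bprob, ite_mul, one_mul, zero_mul, mul_ite, mul_zero]
  simp [Finset.sum_ite_eq']

lemma tau_eq (A : Matrix H H ℝ) (μ : H → ℝ) (hA1 : ∀ h, ∑ h', A h' h = 1)
    (hν : ∀ j g, 0 < ((A ^ j).mulVec μ) g)
    (vs : List (H → ℝ)) (i : ℕ) (hi : i < vs.length) (g : H) :
    tau A μ vs i g = jointAt A (A.mulVec μ) vs i g := by
  rw [jointAt_eq A hA1 _ vs i hi g, tau]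
  by_cases h0 : i = 0
  · subst h0
    rw [if_pos rfl, lmsg_eq A μ hA1 hν]
    simp [fwdVec, pow_one]
  · rw [if_neg h0]
    by_cases hlast : i = vs.length - 1
    · rw [if_pos hlast]
      have hd : vs.drop (i + 1) = [] := by
        apply List.drop_eq_nil_of_le
        omega
      simp [hd, bprob, hA1 g]
    · rw [if_neg hlast]
      rw [lmsg_eq A μ hA1 hν]
      have hy : ((A ^ (i + 1)).mulVec μ) g ≠ 0 := (hν (i + 1) g).ne'
      field_simp

end Stmt3Aux

theorem stmt3 {H X : Type*} [Fintype H] [Fintype X] [DecidableEq H]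
    (μ : H → ℝ) (A : Matrix H H ℝ) (W : X → H → ℝ)
    (hμ0 : ∀ h, 0 ≤ μ h) (hμ1 : ∑ h, μ h = 1)
    (hA0 : ∀ h h', 0 ≤ A h' h) (hA1 : ∀ h, ∑ h', A h' h = 1)
    (hW0 : ∀ z h, 0 ≤ W z h) (hW1 : ∀ h, ∑ z, W z h = 1)
    -- regularity
    (hErg : ∃ n₀ : ℕ, ∀ n ≥ n₀, ∀ h h' : H, 0 < (A ^ n) h' h)
    (hfull : ∀ h, 0 < μ h)
    (π : H → ℝ) (hπ : ∀ h, 0 ≤ π h ∧ π h ≤ 1)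
    (T : ℕ) (e0 : X) (x : Fin T → X) :
    (∀ i < T + 2, ∀ g : H,
        tau A μ (promptEmb W π e0 x) i g
          = jointAt A (A.mulVec μ) (promptEmb W π e0 x) i g)
    ∧ ∀ i, 0 < i → i < T + 2 →
        ((0 < ∑ g, jointAt A (A.mulVec μ) (promptEmb W π e0 x) i g →
          ∀ z : X,
            gbar A μ W (promptEmb W π e0 x) i z
              = (∑ g, W z g * jointAt A (A.mulVec μ) (promptEmb W π e0 x) i g)
                  / (∑ g, jointAt A (A.mulVec μ) (promptEmb W π e0 x) i g)
          ∧ gbar A μ W (promptEmb W π e0 x) i z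
              = ∑ g, W z g *
                  (jointAt A (A.mulVec μ) (promptEmb W π e0 x) i g
                    / ∑ g', jointAt A (A.mulVec μ) (promptEmb W π e0 x) i g'))
        ∧ (¬ 0 < ∑ g, jointAt A (A.mulVec μ) (promptEmb W π e0 x) i g →
            ∀ z : X, gbar A μ W (promptEmb W π e0 x) i z = 0)) := by
  classical
  -- positivity of all marginals `A^j μ`
  obtain ⟨n₀, hn⟩ := hErg
  have hApow0 : ∀ n (h h' : H), 0 ≤ (A ^ n) h' h := by
    intro n
    induction n with
    | zero =>
        intro h h'
        by_cases hh : h' = h <;> simp [Matrix.one_apply, hh]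
    | succ n ih =>
        intro h h'
        rw [pow_succ, Matrix.mul_apply]
        exact Finset.sum_nonneg fun k _ => mul_nonneg (ih k h') (hA0 h k)
  have hrow : ∀ g : H, ∃ k, 0 < A g k := by
    intro g
    by_contra hc
    push_neg at hc
    have hz : ∀ k, A g k = 0 := fun k => le_antisymm (hc k) (hA0 k g)
    have hp := hn (n₀ + 1) (Nat.le_succ _) g g
    rw [pow_succ'] at hp
    simp [Matrix.mul_apply, hz] at hp
  have hν : ∀ j g, 0 < ((A ^ j).mulVec μ) g := by
    intro j
    induction j with
    | zero => intro g; simpa [Matrix.one_mulVec] using hfull g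
    | succ j ih =>
        intro g
        have he : (A ^ (j + 1)).mulVec μ = A.mulVec ((A ^ j).mulVec μ) := by
          rw [pow_succ', ← Matrix.mulVec_mulVec]
        rw [he]
        obtain ⟨k, hk⟩ := hrow g
        refine Finset.sum_pos' (fun h _ => mul_nonneg (hA0 h g) (ih h).le)
          ⟨k, Finset.mem_univ k, mul_pos hk (ih k)⟩
  set vs := promptEmb W π e0 x with hvsdef
  have hlen : vs.length = T + 2 := by simp [hvsdef, promptEmb]
  have hent : ∀ v ∈ vs, ∀ h : H, 0 ≤ v h := by
    intro v hv h
    simp only [hvsdef, promptEmb, List.mem_cons, List.mem_ofFn] at hv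
    rcases hv with rfl | rfl | ⟨k, rfl⟩
    · exact (hπ h).1
    · exact hW0 e0 h
    · exact hW0 (x k) h
  have htau : ∀ i < T + 2, ∀ g : H,
      tau A μ vs i g = jointAt A (A.mulVec μ) vs i g := by
    intro i hi g
    exact Stmt3Aux.tau_eq A μ hA1 hν vs i (by omega) g
  refine ⟨htau, ?_⟩
  intro i hi1 hi2
  have hjnn : ∀ g : H, 0 ≤ jointAt A (A.mulVec μ) vs i g := by
    intro g
    rw [Stmt3Aux.jointAt_eq A hA1 _ vs i (by omega) g]
    refine mul_nonneg ?_ (Finset.sum_nonneg fun g' _ => mul_nonneg (hA0 g g') ?_)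
    · refine Stmt3Aux.fwdVec_nonneg A hA0 _ _ (fun h => ?_) ?_ g
      · exact Finset.sum_nonneg fun k _ => mul_nonneg (hA0 k h) (hμ0 k)
      · exact fun w hw => hent w ((List.take_sublist i vs).subset hw)
    · exact Stmt3Aux.bprob_nonneg A hA0 _
        (fun w hw => hent w ((List.drop_sublist (i + 1) vs).subset hw)) g'
  have habs : (∑ g, |tau A μ vs i g|) = ∑ g, jointAt A (A.mulVec μ) vs i g := by
    refine Finset.sum_congr rfl fun g _ => ?_
    rw [htau i hi2 g, abs_of_nonneg (hjnn g)]
  constructor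
  · intro hS z
    have hS' : (∑ g, |tau A μ vs i g|) ≠ 0 := by rw [habs]; exact hS.ne'
    have hg : gbar A μ W vs i z
        = ∑ g, W z g * (jointAt A (A.mulVec μ) vs i g
            / ∑ g', jointAt A (A.mulVec μ) vs i g') := by
      rw [gbar, if_neg hS']
      refine Finset.sum_congr rfl fun g _ => ?_
      rw [htau i hi2 g, habs]
    refine ⟨?_, hg⟩
    rw [hg, Finset.sum_div]
    exact Finset.sum_congr rfl fun g _ => (mul_div_assoc _ _ _).symm
  · intro hS z
    have h0 : (∑ g, |tau A μ vs i g|) = 0 := by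
      rw [habs]
      exact le_antisymm (not_lt.mp hS) (Finset.sum_nonneg fun g _ => hjnn g)
    rw [gbar, if_pos h0]


end
end

section
/- Assume the non-degeneracy condition with recoverable hidden states H* = {j*} × S*. Write G_i(x) = P(X_i | X_{−i} = x_{−i}). Then there exists a matrix Θ^{(1)} ∈ ℝ^{|H|×|X|} such that for all x with P(X_{1:T} = x) > 0, all positions i, and all s ∈ S*: (Θ^{(1)} G_i(x))_{(j*,s)} = P(H_i = (j*,s) | X_{−i} = x_{−i}) and ‖Θ^{(1)} G_i(x)‖₁ = 1. Moreover, for each s ∈ S* there exists Θ^{(2,s)} ∈ ℝ^{|𝕄|×|X|} such that for all such x and i: Θ^{(2,s)} G_i(x) = P(M_{j*}, H_i = (j*,s) | X_{−i} = x_{−i}), the vector with entries P(M_{j*} = m, H_i = (j*,s) | X_{−i} = x_{−i}). -/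
open scoped Classical

noncomputable section

/-- `mJointAt A μ W m x i g = P(H_i = g, X_{−i} = x_{−i} | M = m)` in a
memory-augmented HMM (hidden chain `H_1, …, H_T`, `P(H_1) = A μ`). -/
def mJointAt {𝕄 S X : Type*} {N T : ℕ} [Fintype S] [DecidableEq S]
    (A : Matrix (Fin N × S) (Fin N × S) ℝ) (μ : Fin N × S → ℝ)
    (W : X → 𝕄 → Fin N × S → ℝ) (m : Fin N → 𝕄)
    (x : Fin T → X) (i : Fin T) (g : Fin N × S) : ℝ :=
  ∑ h, fwdVec A (A.mulVec μ)
    (List.ofFn fun k : Fin T =>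
      if k = i then (fun g' => if g' = g then 1 else 0)
      else fun g' => W (x k) (m g'.1) g') h

/-- `mZ … x i = P(X_{−i} = x_{−i})`. -/
def mZ {𝕄 S X : Type*} {N T : ℕ} [Fintype 𝕄] [Fintype S] [DecidableEq S]
    (pM : (Fin N → 𝕄) → ℝ) (A : Matrix (Fin N × S) (Fin N × S) ℝ)
    (μ : Fin N × S → ℝ) (W : X → 𝕄 → Fin N × S → ℝ)
    (x : Fin T → X) (i : Fin T) : ℝ :=
  ∑ m, pM m * ∑ g, mJointAt A μ W m x i g

/-- `mSeqPm … m x = P(X_{1:T} = x | M = m)`. -/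
def mSeqPm {𝕄 S X : Type*} {N T : ℕ} [Fintype S]
    (A : Matrix (Fin N × S) (Fin N × S) ℝ) (μ : Fin N × S → ℝ)
    (W : X → 𝕄 → Fin N × S → ℝ) (m : Fin N → 𝕄) (x : Fin T → X) : ℝ :=
  ∑ h, fwdVec A (A.mulVec μ)
    (List.ofFn fun k : Fin T => fun g' => W (x k) (m g'.1) g') h

/-- `mSeqP … x = P(X_{1:T} = x)`. -/
def mSeqP {𝕄 S X : Type*} {N T : ℕ} [Fintype 𝕄] [Fintype S]
    (pM : (Fin N → 𝕄) → ℝ) (A : Matrix (Fin N × S) (Fin N × S) ℝ)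
    (μ : Fin N × S → ℝ) (W : X → 𝕄 → Fin N × S → ℝ) (x : Fin T → X) : ℝ :=
  ∑ m, pM m * mSeqPm A μ W m x

/-- `mGtok … x i z = P(X_i = z | X_{−i} = x_{−i})`, the pretrained model
output `G_i(x)` at position `i`. -/
def mGtok {𝕄 S X : Type*} {N T : ℕ} [Fintype 𝕄] [Fintype S] [DecidableEq S]
    (pM : (Fin N → 𝕄) → ℝ) (A : Matrix (Fin N × S) (Fin N × S) ℝ)
    (μ : Fin N × S → ℝ) (W : X → 𝕄 → Fin N × S → ℝ)
    (x : Fin T → X) (i : Fin T) (z : X) : ℝ :=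
  (∑ m, pM m * ∑ g, mJointAt A μ W m x i g * W z (m g.1) g) / mZ pM A μ W x i

/-!
By non-degeneracy there is a linear map `L` on `ℝ^X` sending each column
`W_{:,(m,(j*,s))}`, `s ∈ S*`, to the coordinate vector `e_{(m,s)}` and killing every
column outside `H*`. Since `G_i(x) = Σ_{m,g} P(M = m, H_i = g | X_{−i}) W_{:,(m_{g.1},g)}`,
applying `L` to `G_i(x)` reads off `P(M_{j*} = m₀, H_i = (j*,s) | X_{−i})`; this is `Θ^{(2,s)}`,
and summing over `m₀` gives `P(H_i = (j*,s) | X_{−i})`. Because `G_i(x)` sums to one, the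
leftover mass `1 − Σ_{s ∈ S*} P(H_i = (j*,s) | X_{−i})` is linear in `G_i(x)` as well; put on a
row outside `H*`, it completes these rows to a probability vector, which is `Θ^{(1)} G_i(x)`.
The conditionals are well defined since `P(X_{−i} = x_{−i}) ≥ P(X = x) > 0`.
-/

open scoped Matrix


theorem exists_linearMap_apply_eq_single_of_disjoint {K V ι : Type*} [DivisionRing K]
    [AddCommGroup V] [Module K V] [DecidableEq ι] {u : ι → V} (hu : LinearIndependent K u)
    {V₂ : Submodule K V} (hV₂ : Submodule.span K (Set.range u) ⊓ V₂ = ⊥) :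
    ∃ L : V →ₗ[K] (ι → K), (∀ i, L (u i) = Pi.single i 1) ∧ V₂ ≤ LinearMap.ker L := by
  have hu₂ : LinearIndependent K (V₂.mkQ ∘ u) :=
    hu.map (by rw [Submodule.ker_mkQ]; exact disjoint_iff.mpr hV₂)
  obtain ⟨g, hg⟩ := LinearMap.exists_extend (Finsupp.lcoeFun ∘ₗ hu₂.repr)
  refine ⟨g ∘ₗ V₂.mkQ, fun i => ?_, fun v hv => ?_⟩
  · have hmem : V₂.mkQ (u i) ∈ Submodule.span K (Set.range (V₂.mkQ ∘ u)) :=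
      Submodule.subset_span ⟨i, rfl⟩
    have := congrArg (· ⟨_, hmem⟩) hg
    simp only [LinearMap.comp_apply, Submodule.subtype_apply] at this
    rw [LinearMap.comp_apply, this, hu₂.repr_eq_single i _ rfl, Finsupp.lcoeFun_apply,
      Finsupp.single_eq_pi_single]
  · simp [(Submodule.Quotient.mk_eq_zero V₂).mpr hv]

theorem exists_matrix_extending_readout {H X : Type*} [Fintype H] [Fintype X]
    (Hs : Finset H) (ψ : H → (X → ℝ) →ₗ[ℝ] ℝ) :
    ∃ Θ : Matrix H X ℝ, ∀ (v : X → ℝ) (p : H → ℝ), ∑ z, v z = 1 → 0 ≤ p → ∑ g, p g = 1 →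
      (∀ g ∈ Hs, ψ g v = p g) → (∀ g ∈ Hs, (Θ *ᵥ v) g = p g) ∧ ∑ g, |(Θ *ᵥ v) g| = 1 := by
  by_cases hHs : ∃ d, d ∉ Hs
  · obtain ⟨d, hd⟩ := hHs
    -- the mass outside `Hs` is read off as `∑ v - ∑_{Hs} ψ` and put on the row `d ∉ Hs`
    let Λ : (X → ℝ) →ₗ[ℝ] (H → ℝ) := LinearMap.pi fun g =>
      (if g ∈ Hs then ψ g else 0) +
        if g = d then ∑ z, LinearMap.proj z - ∑ g' ∈ Hs, ψ g' else 0
    refine ⟨LinearMap.toMatrix' Λ, fun v p hv hp0 hp1 hψ => ?_⟩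
    have hrest : 1 - ∑ g ∈ Hs, p g = ∑ g ∈ Hsᶜ, p g := by
      rw [← hp1, ← Finset.sum_add_sum_compl Hs p, add_sub_cancel_left]
    have hΛ : ∀ g, (LinearMap.toMatrix' Λ *ᵥ v) g
        = (if g ∈ Hs then p g else 0) + if g = d then ∑ g' ∈ Hsᶜ, p g' else 0 := by
      intro g
      rw [LinearMap.toMatrix'_mulVec]
      simp only [Λ, LinearMap.pi_apply, LinearMap.add_apply]
      congr 1
      · split_ifs with hg
        · exact hψ g hg
        · rfl
      · split_ifs
        · simp only [LinearMap.sub_apply, LinearMap.sum_apply, LinearMap.proj_apply, hv]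
          rw [Finset.sum_congr rfl hψ, hrest]
        · rfl
    refine ⟨fun g hg => by rw [hΛ, if_pos hg, if_neg (ne_of_mem_of_not_mem hg hd), add_zero],
      ?_⟩
    have hnonneg :
        ∀ g, 0 ≤ (if g ∈ Hs then p g else 0) + if g = d then ∑ g' ∈ Hsᶜ, p g' else 0 := by
      intro g
      refine add_nonneg ?_ ?_ <;> split_ifs
      exacts [hp0 g, le_rfl, Finset.sum_nonneg fun g _ => hp0 g, le_rfl]
    rw [Finset.sum_congr rfl fun g _ => by rw [hΛ, abs_of_nonneg (hnonneg g)],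
      Finset.sum_add_distrib, Finset.sum_ite_mem, Finset.univ_inter, Finset.sum_ite_eq',
      if_pos (Finset.mem_univ _), Finset.sum_add_sum_compl, hp1]
  · push Not at hHs
    refine ⟨LinearMap.toMatrix' (LinearMap.pi ψ), fun v p _ hp0 hp1 hψ => ?_⟩
    have hΘ : LinearMap.toMatrix' (LinearMap.pi ψ) *ᵥ v = p := by
      funext g
      rw [LinearMap.toMatrix'_mulVec, LinearMap.pi_apply, hψ g (hHs g)]
    rw [hΘ]
    exact ⟨fun _ _ => rfl, by simp only [abs_of_nonneg (hp0 _), hp1]⟩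

section ForwardPass

variable {H : Type*} [Fintype H] (A : Matrix H H ℝ)

theorem fwdVec_sum_smul {ι : Type*} (s : Finset ι) (c : ι → ℝ) (μ : ι → H → ℝ)
    (l : List (H → ℝ)) :
    fwdVec A (∑ j ∈ s, c j • μ j) l = ∑ j ∈ s, c j • fwdVec A (μ j) l := by
  induction l generalizing μ with
  | nil => rfl
  | cons v l ih =>
    have hstep : (A *ᵥ fun h => (∑ j ∈ s, c j • μ j) h * v h)
        = ∑ j ∈ s, c j • A *ᵥ fun h => μ j h * v h := by
      simp only [← Matrix.mulVec_smul, ← Matrix.mulVec_sum]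
      congr 1
      funext h
      simp only [Finset.sum_apply, Pi.smul_apply, smul_eq_mul, Finset.sum_mul, mul_assoc]
    exact (congrArg (fwdVec A · l) hstep).trans (ih _)

theorem fwdVec_set_sum_smul {ι : Type*} (s : Finset ι) (c : ι → ℝ) (w : ι → H → ℝ)
    (μ : H → ℝ) (l : List (H → ℝ)) {n : ℕ} (hn : n < l.length) :
    fwdVec A μ (l.set n (∑ j ∈ s, c j • w j)) = ∑ j ∈ s, c j • fwdVec A μ (l.set n (w j)) := by
  induction l generalizing n μ with
  | nil => simp at hn
  | cons v l ih =>
    cases n with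
    | zero =>
      simp only [List.set_cons_zero, fwdVec]
      rw [← fwdVec_sum_smul]
      congr 1
      simp only [← Matrix.mulVec_smul, ← Matrix.mulVec_sum]
      congr 1
      funext h
      simp only [Finset.sum_apply, Pi.smul_apply, smul_eq_mul, Finset.mul_sum]
      exact Finset.sum_congr rfl fun j _ => by ring
    | succ n => exact ih _ (Nat.lt_of_succ_lt_succ hn)

theorem fwdVec_ofFn_eq_sum_mul [DecidableEq H] {T : ℕ} (i : Fin T) (f : Fin T → H → ℝ)
    (μ : H → ℝ) (h : H) :
    fwdVec A μ (List.ofFn f) h = ∑ g, f i g * fwdVec A μ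
      (List.ofFn fun k => if k = i then fun g' => if g' = g then 1 else 0 else f k) h := by
  have hset : ∀ u : H → ℝ,
      (List.ofFn fun k => if k = i then u else f k) = (List.ofFn f).set i u := by
    intro u
    refine List.ext_getElem (by simp) fun n h₁ _ => ?_
    rw [List.getElem_set, List.getElem_ofFn, List.getElem_ofFn]
    simp only [Fin.ext_iff, eq_comm (a := (i : ℕ))]
  have hfi : f i = ∑ g, f i g • fun g' => if g' = g then 1 else 0 := by
    funext g'
    simp [Finset.sum_apply]
  have hi : (i : ℕ) < (List.ofFn f).length := by simp
  calc fwdVec A μ (List.ofFn f) h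
      = fwdVec A μ ((List.ofFn f).set i (∑ g, f i g • fun g' => if g' = g then 1 else 0)) h := by
        rw [← hfi, ← List.getElem_ofFn (h := hi), List.set_getElem_self]
    _ = _ := by
        simp only [fwdVec_set_sum_smul A _ _ _ μ _ hi, Finset.sum_apply, Pi.smul_apply,
          smul_eq_mul, hset]

theorem fwdVec_nonneg (hA : ∀ g g', 0 ≤ A g' g) {μ : H → ℝ} (hμ : 0 ≤ μ)
    {l : List (H → ℝ)} (hl : ∀ v ∈ l, 0 ≤ v) : 0 ≤ fwdVec A μ l := by
  induction l generalizing μ with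
  | nil => exact hμ
  | cons v l ih =>
    refine ih (fun h => Finset.sum_nonneg fun g _ => ?_) fun v' hv' => hl v' (.tail _ hv')
    exact mul_nonneg (hA g h) (mul_nonneg (hμ g) (hl v List.mem_cons_self g))

end ForwardPass

/-- `mPost … x i g = P(H_i = g | X_{−i} = x_{−i})`. -/
def mPost {𝕄 S X : Type*} {N T : ℕ} [Fintype 𝕄] [Fintype S] [DecidableEq S]
    (pM : (Fin N → 𝕄) → ℝ) (A : Matrix (Fin N × S) (Fin N × S) ℝ)
    (μ : Fin N × S → ℝ) (W : X → 𝕄 → Fin N × S → ℝ)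
    (x : Fin T → X) (i : Fin T) (g : Fin N × S) : ℝ :=
  (∑ m, pM m * mJointAt A μ W m x i g) / mZ pM A μ W x i

section MemoryHMM

variable {𝕄 S X : Type*} {N T : ℕ} [Fintype S] [DecidableEq S]
  (pM : (Fin N → 𝕄) → ℝ) (A : Matrix (Fin N × S) (Fin N × S) ℝ) (μ : Fin N × S → ℝ)
  (W : X → 𝕄 → Fin N × S → ℝ)

theorem mJointAt_nonneg (hA0 : ∀ g g', 0 ≤ A g' g) (hμ0 : ∀ g, 0 ≤ μ g)
    (hW0 : ∀ z m0 g, 0 ≤ W z m0 g) (m : Fin N → 𝕄) (x : Fin T → X) (i : Fin T)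
    (g : Fin N × S) : 0 ≤ mJointAt A μ W m x i g := by
  refine Finset.sum_nonneg fun h _ => fwdVec_nonneg A hA0
    (fun h => Finset.sum_nonneg fun g _ => mul_nonneg (hA0 g h) (hμ0 g)) ?_ h
  simp only [List.mem_ofFn, forall_exists_index, forall_apply_eq_imp_iff]
  intro k g'
  simp only [Pi.zero_apply, ite_apply]
  split_ifs
  exacts [zero_le_one, le_rfl, hW0 _ _ _]

theorem mSeqPm_eq_sum_mJointAt_mul (m : Fin N → 𝕄) (x : Fin T → X) (i : Fin T) :
    mSeqPm A μ W m x = ∑ g, mJointAt A μ W m x i g * W (x i) (m g.1) g := by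
  simp only [mSeqPm, mJointAt, Finset.sum_mul]
  rw [Finset.sum_comm]
  refine Finset.sum_congr rfl fun h _ => ?_
  rw [fwdVec_ofFn_eq_sum_mul A i]
  simp only [mul_comm]

theorem sum_joint_eq_mZ [Fintype 𝕄] [Fintype X] (hW1 : ∀ m0 g, ∑ z, W z m0 g = 1)
    (x : Fin T → X) (i : Fin T) :
    ∑ z, ∑ m, pM m * ∑ g, mJointAt A μ W m x i g * W z (m g.1) g = mZ pM A μ W x i := by
  rw [Finset.sum_comm]
  refine Finset.sum_congr rfl fun m _ => ?_
  rw [← Finset.mul_sum, Finset.sum_comm]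
  simp only [← Finset.mul_sum, hW1, mul_one]

theorem mSeqP_le_mZ [Fintype 𝕄] [Fintype X] (hpM0 : ∀ m, 0 ≤ pM m)
    (hA0 : ∀ g g', 0 ≤ A g' g) (hμ0 : ∀ g, 0 ≤ μ g) (hW0 : ∀ z m0 g, 0 ≤ W z m0 g)
    (hW1 : ∀ m0 g, ∑ z, W z m0 g = 1) (x : Fin T → X) (i : Fin T) :
    mSeqP pM A μ W x ≤ mZ pM A μ W x i := by
  rw [← sum_joint_eq_mZ pM A μ W hW1 x i, mSeqP]
  simp only [mSeqPm_eq_sum_mJointAt_mul A μ W _ x i]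
  refine Finset.single_le_sum
    (f := fun z => ∑ m, pM m * ∑ g, mJointAt A μ W m x i g * W z (m g.1) g)
    (fun z _ => ?_) (Finset.mem_univ (x i))
  exact Finset.sum_nonneg fun m _ => mul_nonneg (hpM0 m) <| Finset.sum_nonneg fun g _ =>
    mul_nonneg (mJointAt_nonneg A μ W hA0 hμ0 hW0 m x i g) (hW0 _ _ _)

theorem sum_mGtok [Fintype 𝕄] [Fintype X] (hW1 : ∀ m0 g, ∑ z, W z m0 g = 1)
    (x : Fin T → X) (i : Fin T) (hZ : mZ pM A μ W x i ≠ 0) : ∑ z, mGtok pM A μ W x i z = 1 := by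
  simp only [mGtok, ← Finset.sum_div, sum_joint_eq_mZ pM A μ W hW1, div_self hZ]

theorem mPost_nonneg [Fintype 𝕄] (hpM0 : ∀ m, 0 ≤ pM m) (hA0 : ∀ g g', 0 ≤ A g' g)
    (hμ0 : ∀ g, 0 ≤ μ g) (hW0 : ∀ z m0 g, 0 ≤ W z m0 g) (x : Fin T → X) (i : Fin T) :
    0 ≤ mPost pM A μ W x i := by
  have hJ := mJointAt_nonneg A μ W hA0 hμ0 hW0 (x := x) (i := i)
  intro g
  exact div_nonneg (Finset.sum_nonneg fun m _ => mul_nonneg (hpM0 m) (hJ m g))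
    (Finset.sum_nonneg fun m _ => mul_nonneg (hpM0 m) (Finset.sum_nonneg fun g _ => hJ m g))

theorem sum_mPost [Fintype 𝕄] (x : Fin T → X) (i : Fin T) (hZ : mZ pM A μ W x i ≠ 0) :
    ∑ g, mPost pM A μ W x i g = 1 := by
  simp only [mPost, ← Finset.sum_div]
  rw [Finset.sum_comm]
  simp only [← Finset.mul_sum]
  exact div_self hZ

theorem mGtok_eq_sum_smul [Fintype 𝕄] (x : Fin T → X) (i : Fin T) :
    mGtok pM A μ W x i = ∑ m, ∑ g,
      (pM m * mJointAt A μ W m x i g / mZ pM A μ W x i) • fun z => W z (m g.1) g := by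
  funext z
  simp only [mGtok, Finset.sum_apply, Pi.smul_apply, smul_eq_mul, Finset.sum_div,
    Finset.mul_sum]
  exact Finset.sum_congr rfl fun m _ => Finset.sum_congr rfl fun g _ => by ring

end MemoryHMM

section Readout

variable {𝕄 S X : Type*} {N : ℕ} [DecidableEq 𝕄] [DecidableEq S]
  {W : X → 𝕄 → Fin N × S → ℝ} {jstar : Fin N} {Sstar : Finset S}
  {L : (X → ℝ) →ₗ[ℝ] (𝕄 × Sstar → ℝ)}

variable (W jstar Sstar) in
def IsRecoveryMap (L : (X → ℝ) →ₗ[ℝ] (𝕄 × Sstar → ℝ)) : Prop :=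
  (∀ p : 𝕄 × Sstar, L (fun z => W z p.1 (jstar, p.2)) = Pi.single p 1) ∧
    ∀ m0 g, ¬(g.1 = jstar ∧ g.2 ∈ Sstar) → L (fun z => W z m0 g) = 0

theorem exists_isRecoveryMap
    (hli : LinearIndependent ℝ
      (fun p : 𝕄 × {s : S // s ∈ Sstar} => fun z : X => W z p.1 (jstar, p.2.1)))
    (hspan : Submodule.span ℝ
        {f : X → ℝ | ∃ m0 : 𝕄, ∃ s : S, s ∈ Sstar ∧ f = fun z => W z m0 (jstar, s)}
      ⊓ Submodule.span ℝ
        {f : X → ℝ | ∃ m0 : 𝕄, ∃ g : Fin N × S,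
          ¬(g.1 = jstar ∧ g.2 ∈ Sstar) ∧ f = fun z => W z m0 g}
      = ⊥) :
    ∃ L, IsRecoveryMap W jstar Sstar L := by
  have hrange : Set.range (fun p : 𝕄 × Sstar => fun z : X => W z p.1 (jstar, p.2.1))
      = {f : X → ℝ | ∃ m0 : 𝕄, ∃ s : S, s ∈ Sstar ∧ f = fun z => W z m0 (jstar, s)} := by
    ext f
    simp [eq_comm]
  obtain ⟨L, hL, hLker⟩ := exists_linearMap_apply_eq_single_of_disjoint hli (hrange ▸ hspan)
  exact ⟨L, hL, fun m0 g hg => hLker (Submodule.subset_span ⟨m0, g, hg, rfl⟩)⟩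

theorem IsRecoveryMap.apply_col (hL : IsRecoveryMap W jstar Sstar L) (m0 : 𝕄) (g : Fin N × S)
    (p : 𝕄 × Sstar) :
    L (fun z => W z m0 g) p = if g = (jstar, (p.2 : S)) ∧ m0 = p.1 then 1 else 0 := by
  by_cases hg : g.1 = jstar ∧ g.2 ∈ Sstar
  · obtain ⟨j, s⟩ := g
    obtain ⟨rfl, hs⟩ := hg
    have hcol := hL.1 (m0, ⟨s, hs⟩)
    dsimp only at hcol
    rw [hcol, Pi.single_apply]
    simp only [Prod.ext_iff, Subtype.ext_iff, true_and, and_comm, eq_comm]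
  · rw [hL.2 m0 g hg, Pi.zero_apply, if_neg]
    rintro ⟨rfl, -⟩
    exact hg ⟨rfl, p.2.2⟩

variable [Fintype 𝕄] [Fintype S] {T : ℕ} (pM : (Fin N → 𝕄) → ℝ)
  (A : Matrix (Fin N × S) (Fin N × S) ℝ) (μ : Fin N × S → ℝ)

theorem IsRecoveryMap.apply_mGtok (hL : IsRecoveryMap W jstar Sstar L) (x : Fin T → X)
    (i : Fin T) (p : 𝕄 × Sstar) :
    L (mGtok pM A μ W x i) p
      = (∑ m, if m jstar = p.1 then pM m * mJointAt A μ W m x i (jstar, p.2) else 0)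
          / mZ pM A μ W x i := by
  rw [mGtok_eq_sum_smul, Finset.sum_div]
  simp only [map_sum, map_smul, Finset.sum_apply, Pi.smul_apply, smul_eq_mul, hL.apply_col,
    mul_ite, mul_one, mul_zero, ite_and, Finset.sum_ite_eq', Finset.mem_univ, if_true, ite_div,
    zero_div]

variable (L) in
def stateReadout (g : Fin N × S) : (X → ℝ) →ₗ[ℝ] ℝ :=
  if h : g.2 ∈ Sstar then ∑ m0, LinearMap.proj (m0, ⟨g.2, h⟩) ∘ₗ L else 0

theorem IsRecoveryMap.stateReadout_mGtok (hL : IsRecoveryMap W jstar Sstar L) (x : Fin T → X)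
    (i : Fin T) {g : Fin N × S} (hg : g ∈ {jstar} ×ˢ Sstar) :
    stateReadout L g (mGtok pM A μ W x i) = mPost pM A μ W x i g := by
  obtain ⟨j, s⟩ := g
  obtain ⟨hj, hs⟩ := Finset.mem_product.mp hg
  obtain rfl : j = jstar := Finset.mem_singleton.mp hj
  simp only [stateReadout, dif_pos hs, LinearMap.sum_apply,
    LinearMap.comp_apply, LinearMap.proj_apply, hL.apply_mGtok, ← Finset.sum_div, mPost]
  rw [Finset.sum_comm]
  simp only [Finset.sum_ite_eq, Finset.mem_univ, if_true]

end Readout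

theorem stmt7_general {𝕄 S X : Type*} {N : ℕ}
    [Fintype 𝕄] [Fintype S] [Fintype X] [DecidableEq 𝕄] [DecidableEq S]
    (pM : (Fin N → 𝕄) → ℝ) (μ : Fin N × S → ℝ)
    (A : Matrix (Fin N × S) (Fin N × S) ℝ) (W : X → 𝕄 → Fin N × S → ℝ)
    (hpM0 : ∀ m, 0 ≤ pM m)
    (hμ0 : ∀ g, 0 ≤ μ g)
    (hA0 : ∀ g g', 0 ≤ A g' g)
    (hW0 : ∀ z m0 g, 0 ≤ W z m0 g) (hW1 : ∀ m0 g, ∑ z, W z m0 g = 1)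
    -- non-degeneracy with recoverable hidden states `H* = {j*} × S*`
    (jstar : Fin N) (Sstar : Finset S)
    (hli : LinearIndependent ℝ
      (fun p : 𝕄 × {s : S // s ∈ Sstar} => fun z : X => W z p.1 (jstar, p.2.1)))
    (hspan : Submodule.span ℝ
        {f : X → ℝ | ∃ m0 : 𝕄, ∃ s : S, s ∈ Sstar ∧ f = fun z => W z m0 (jstar, s)}
      ⊓ Submodule.span ℝ
        {f : X → ℝ | ∃ m0 : 𝕄, ∃ g : Fin N × S,
          ¬(g.1 = jstar ∧ g.2 ∈ Sstar) ∧ f = fun z => W z m0 g}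
      = ⊥)
    (T : ℕ) :
    (∃ Θ1 : Matrix (Fin N × S) X ℝ,
      ∀ x : Fin T → X, 0 < mSeqP pM A μ W x → ∀ i : Fin T, ∀ s ∈ Sstar,
        (Θ1.mulVec (mGtok pM A μ W x i)) (jstar, s)
            = (∑ m, pM m * mJointAt A μ W m x i (jstar, s)) / mZ pM A μ W x i
        ∧ ∑ g, |(Θ1.mulVec (mGtok pM A μ W x i)) g| = 1)
    ∧ ∀ s ∈ Sstar, ∃ Θ2 : Matrix 𝕄 X ℝ,
        ∀ x : Fin T → X, 0 < mSeqP pM A μ W x → ∀ i : Fin T, ∀ m0 : 𝕄,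
          (Θ2.mulVec (mGtok pM A μ W x i)) m0
            = (∑ m, if m jstar = m0 then pM m * mJointAt A μ W m x i (jstar, s) else 0)
                / mZ pM A μ W x i := by
  obtain ⟨L, hL⟩ := exists_isRecoveryMap hli hspan
  have hZ : ∀ x, 0 < mSeqP pM A μ W x → ∀ i : Fin T, mZ pM A μ W x i ≠ 0 := fun x hx i =>
    (hx.trans_le (mSeqP_le_mZ pM A μ W hpM0 hA0 hμ0 hW0 hW1 x i)).ne'
  refine ⟨?_, fun s hs => ⟨fun m0 => LinearMap.toMatrix' L (m0, ⟨s, hs⟩), fun x _ i m0 => ?_⟩⟩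
  · obtain ⟨Θ1, hΘ1⟩ := exists_matrix_extending_readout ({jstar} ×ˢ Sstar) (stateReadout L)
    refine ⟨Θ1, fun x hx i s hs => ?_⟩
    obtain ⟨hrow, hnorm⟩ := hΘ1 _ _ (sum_mGtok pM A μ W hW1 x i (hZ x hx i))
      (mPost_nonneg pM A μ W hpM0 hA0 hμ0 hW0 x i) (sum_mPost pM A μ W x i (hZ x hx i))
      fun g hg => hL.stateReadout_mGtok pM A μ x i hg
    exact ⟨hrow _ (Finset.mk_mem_product (Finset.mem_singleton_self _) hs), hnorm⟩
  · show (LinearMap.toMatrix' L *ᵥ _) (m0, ⟨s, hs⟩) = _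
    rw [LinearMap.toMatrix'_mulVec]
    exact hL.apply_mGtok pM A μ x i (m0, ⟨s, hs⟩)

theorem stmt7 {𝕄 S X : Type*} {N : ℕ}
    [Fintype 𝕄] [Fintype S] [Fintype X] [DecidableEq 𝕄] [DecidableEq S]
    (pM : (Fin N → 𝕄) → ℝ) (μ : Fin N × S → ℝ)
    (A : Matrix (Fin N × S) (Fin N × S) ℝ) (W : X → 𝕄 → Fin N × S → ℝ)
    (hpM0 : ∀ m, 0 ≤ pM m) (hpM1 : ∑ m, pM m = 1)
    (hμ0 : ∀ g, 0 ≤ μ g) (hμ1 : ∑ g, μ g = 1)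
    (hA0 : ∀ g g', 0 ≤ A g' g) (hA1 : ∀ g, ∑ g', A g' g = 1)
    (hW0 : ∀ z m0 g, 0 ≤ W z m0 g) (hW1 : ∀ m0 g, ∑ z, W z m0 g = 1)
    -- non-degeneracy with recoverable hidden states `H* = {j*} × S*`
    (jstar : Fin N) (Sstar : Finset S)
    (hli : LinearIndependent ℝ
      (fun p : 𝕄 × {s : S // s ∈ Sstar} => fun z : X => W z p.1 (jstar, p.2.1)))
    (hspan : Submodule.span ℝ
        {f : X → ℝ | ∃ m0 : 𝕄, ∃ s : S, s ∈ Sstar ∧ f = fun z => W z m0 (jstar, s)}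
      ⊓ Submodule.span ℝ
        {f : X → ℝ | ∃ m0 : 𝕄, ∃ g : Fin N × S,
          ¬(g.1 = jstar ∧ g.2 ∈ Sstar) ∧ f = fun z => W z m0 g}
      = ⊥)
    (T : ℕ) :
    (∃ Θ1 : Matrix (Fin N × S) X ℝ,
      ∀ x : Fin T → X, 0 < mSeqP pM A μ W x → ∀ i : Fin T, ∀ s ∈ Sstar,
        (Θ1.mulVec (mGtok pM A μ W x i)) (jstar, s)
            = (∑ m, pM m * mJointAt A μ W m x i (jstar, s)) / mZ pM A μ W x i
        ∧ ∑ g, |(Θ1.mulVec (mGtok pM A μ W x i)) g| = 1)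
    ∧ ∀ s ∈ Sstar, ∃ Θ2 : Matrix 𝕄 X ℝ,
        ∀ x : Fin T → X, 0 < mSeqP pM A μ W x → ∀ i : Fin T, ∀ m0 : 𝕄,
          (Θ2.mulVec (mGtok pM A μ W x i)) m0
            = (∑ m, if m jstar = m0 then pM m * mJointAt A μ W m x i (jstar, s) else 0)
                / mZ pM A μ W x i :=
  stmt7_general pM μ A W hpM0 hμ0 hA0 hW0 hW1 jstar Sstar hli hspan T

end
end

section
/- In the prompt-tuned memory-augmented HMM with prompt π defined by π_{(m_{1:N},j,s)} = 1 if m_{j*} ∈ supp(b) and 0 otherwise, for every position i > 1 and every x ∈ X^T with P(X̂_{−i} = x̂_{−i}) > 0: supp(P(M_{j*} | X̂_{−i} = x̂_{−i})) ⊆ supp(b). -/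
open scoped Classical
open Matrix

noncomputable section

/-- `mPostH … x i g = P(H_i = g | X_{−i} = x_{−i})`. -/
def mPostH {𝕄 S X : Type*} {N T : ℕ} [Fintype 𝕄] [Fintype S] [DecidableEq S]
    (pM : (Fin N → 𝕄) → ℝ) (A : Matrix (Fin N × S) (Fin N × S) ℝ)
    (μ : Fin N × S → ℝ) (W : X → 𝕄 → Fin N × S → ℝ)
    (x : Fin T → X) (i : Fin T) (g : Fin N × S) : ℝ :=
  (∑ m, pM m * mJointAt A μ W m x i g) / mZ pM A μ W x i

/-- The 0/1 prompt of the paper: `π_{(m_{1:N},j,s)} = 1` if `m_{j*} ∈ supp(b)`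
and `0` otherwise (it does not depend on `(j,s)`). -/
def promptV {𝕄 : Type*} {N : ℕ} (b : 𝕄 → ℝ) (jstar : Fin N)
    (m : Fin N → 𝕄) : ℝ :=
  if b (m jstar) ≠ 0 then 1 else 0

/-- Conditioned on `M = m`, the emission-likelihood vector at position `k`
(0-indexed) of the modified sequence `x̂ = (z̃, x_1, …, x_T)`:
at position `0` the fake token `z̃` has likelihood `π_{(m,j,s)}`, and at
position `k ≥ 1` the token `x_k` has likelihood `W (x_k) (m j) (j,s)`. -/
def hatEm {𝕄 S X : Type*} {N T : ℕ} (W : X → 𝕄 → Fin N × S → ℝ)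
    (b : 𝕄 → ℝ) (jstar : Fin N) (m : Fin N → 𝕄) (x : Fin T → X)
    (k : Fin (T + 1)) : Fin N × S → ℝ :=
  if hk : (k : ℕ) = 0 then fun _ => promptV b jstar m
  else fun g => W (x ⟨(k : ℕ) - 1, by have := k.isLt; omega⟩) (m g.1) g

/-- `hatJointAt … m x i g = P(H_i = g, X̂_{−i} = x̂_{−i} | M = m)` for the
modified sequence `X̂` of length `T+1` (hidden chain `H_1, …, H_{T+1}`,
`P(H_1) = A μ`). -/
def hatJointAt {𝕄 S X : Type*} {N T : ℕ} [Fintype S] [DecidableEq S]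
    (A : Matrix (Fin N × S) (Fin N × S) ℝ) (μ : Fin N × S → ℝ)
    (W : X → 𝕄 → Fin N × S → ℝ) (b : 𝕄 → ℝ) (jstar : Fin N)
    (m : Fin N → 𝕄) (x : Fin T → X) (i : Fin (T + 1)) (g : Fin N × S) : ℝ :=
  ∑ h, fwdVec A (A.mulVec μ)
    (List.ofFn fun k : Fin (T + 1) =>
      if k = i then (fun g' => if g' = g then 1 else 0)
      else hatEm W b jstar m x k) h

/-- `hatZ … x i = P(X̂_{−i} = x̂_{−i})`. -/
def hatZ {𝕄 S X : Type*} {N T : ℕ} [Fintype 𝕄] [Fintype S] [DecidableEq S]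
    (pM : (Fin N → 𝕄) → ℝ) (A : Matrix (Fin N × S) (Fin N × S) ℝ)
    (μ : Fin N × S → ℝ) (W : X → 𝕄 → Fin N × S → ℝ) (b : 𝕄 → ℝ)
    (jstar : Fin N) (x : Fin T → X) (i : Fin (T + 1)) : ℝ :=
  ∑ m, pM m * ∑ g, hatJointAt A μ W b jstar m x i g

/-- `hatSeqPm … m x = P(X̂ = x̂ | M = m)`. -/
def hatSeqPm {𝕄 S X : Type*} {N T : ℕ} [Fintype S]
    (A : Matrix (Fin N × S) (Fin N × S) ℝ) (μ : Fin N × S → ℝ)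
    (W : X → 𝕄 → Fin N × S → ℝ) (b : 𝕄 → ℝ) (jstar : Fin N)
    (m : Fin N → 𝕄) (x : Fin T → X) : ℝ :=
  ∑ h, fwdVec A (A.mulVec μ) (List.ofFn (hatEm W b jstar m x)) h

/-- `hatSeqP … x = P(X̂ = x̂)`. -/
def hatSeqP {𝕄 S X : Type*} {N T : ℕ} [Fintype 𝕄] [Fintype S]
    (pM : (Fin N → 𝕄) → ℝ) (A : Matrix (Fin N × S) (Fin N × S) ℝ)
    (μ : Fin N × S → ℝ) (W : X → 𝕄 → Fin N × S → ℝ) (b : 𝕄 → ℝ)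
    (jstar : Fin N) (x : Fin T → X) : ℝ :=
  ∑ m, pM m * hatSeqPm A μ W b jstar m x

/-!
STATEMENT 12 (Proposition D.7 of the paper).

Prompt-tuned memory-augmented HMM, with prompt
`π_{(m_{1:N},j,s)} = 𝟙(m_{j*} ∈ supp(b))` and modified length-`(T+1)`
sequence `X̂` (fake token `z̃` at position 1).  For every position `i > 1`
and every `x ∈ X^T` with `P(X̂_{−i} = x̂_{−i}) > 0`:
`supp(P(M_{j*} | X̂_{−i} = x̂_{−i})) ⊆ supp(b)`.
-/
lemma fwdVec_zero' {H : Type*} [Fintype H] (A : Matrix H H ℝ) (vs : List (H → ℝ)) :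
    fwdVec A (fun _ => 0) vs = fun _ => 0 := by
  induction vs with
  | nil => rfl
  | cons v vs ih =>
      show fwdVec A (A.mulVec fun h => (fun _ => (0:ℝ)) h * v h) vs = fun _ => 0
      have h1 : (A.mulVec fun h => (fun _ => (0:ℝ)) h * v h) = fun _ => 0 := by
        funext g; simp [Matrix.mulVec, dotProduct]
      rw [h1, ih]

theorem stmt12 {𝕄 S X : Type*} {N : ℕ}
    [Fintype 𝕄] [Fintype S] [Fintype X] [DecidableEq 𝕄] [DecidableEq S]
    (pM : (Fin N → 𝕄) → ℝ) (μ : Fin N × S → ℝ)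
    (A : Matrix (Fin N × S) (Fin N × S) ℝ) (W : X → 𝕄 → Fin N × S → ℝ)
    (hpM0 : ∀ m, 0 ≤ pM m) (hpM1 : ∑ m, pM m = 1)
    (hμ0 : ∀ g, 0 ≤ μ g) (hμ1 : ∑ g, μ g = 1)
    (hA0 : ∀ g g', 0 ≤ A g' g) (hA1 : ∀ g, ∑ g', A g' g = 1)
    (hW0 : ∀ z m0 g, 0 ≤ W z m0 g) (hW1 : ∀ m0 g, ∑ z, W z m0 g = 1)
    (b : 𝕄 → ℝ) (jstar : Fin N)
    (T : ℕ) (x : Fin T → X) (i : Fin (T + 1)) (hi : (i : ℕ) ≠ 0)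
    (hpos : 0 < hatZ pM A μ W b jstar x i) :
    ∀ m0 : 𝕄,
      (∑ m, if m jstar = m0 then pM m * ∑ g, hatJointAt A μ W b jstar m x i g else 0)
          / hatZ pM A μ W b jstar x i ≠ 0 →
      b m0 ≠ 0 := by
  intro m0 hne
  by_contra hb0
  apply hne
  have hnum : (∑ m, if m jstar = m0 then
      pM m * ∑ g, hatJointAt A μ W b jstar m x i g else 0) = 0 := by
    refine Finset.sum_eq_zero fun m _ => ?_
    split_ifs with hm
    · have hJ : ∀ g, hatJointAt A μ W b jstar m x i g = 0 := by
        intro g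
        unfold hatJointAt
        refine Finset.sum_eq_zero fun h _ => ?_
        set f : Fin (T + 1) → (Fin N × S → ℝ) := fun k =>
          if k = i then (fun g' => if g' = g then 1 else 0)
          else hatEm W b jstar m x k with hf
        have hofn : List.ofFn f = f 0 :: List.ofFn (fun k : Fin T => f k.succ) := by
          rw [List.ofFn_succ]
        have hf0 : f 0 = fun _ => 0 := by
          have h0i : (0 : Fin (T + 1)) ≠ i := by
            intro hc
            exact hi (by rw [← hc]; rfl)
          have : f 0 = hatEm W b jstar m x 0 := by simp [hf, h0i]
          rw [this]
          funext g'
          simp [hatEm, promptV, hm, hb0]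
        rw [hofn]
        show fwdVec A (A.mulVec fun h' => (A.mulVec μ) h' * f 0 h') _ h = 0
        have hz : (A.mulVec fun h' => (A.mulVec μ) h' * f 0 h') = fun _ => 0 := by
          rw [hf0]
          funext g'
          simp [Matrix.mulVec, dotProduct]
        rw [hz, fwdVec_zero']
      have : (∑ g, hatJointAt A μ W b jstar m x i g) = 0 :=
        Finset.sum_eq_zero fun g _ => hJ g
      rw [this, mul_zero]
    · rfl
  rw [hnum, zero_div]

end
end
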